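/- arXiv:1911.04351 — 2 statements merged into one kernel-verified Lean document; each statement's English description precedes it below -/
import Mathlib

section
/- Let φ : ℝ → ℝ satisfy |φ'(z)| ≤ B. Consider the one-hidden-layer network f(W) = (φ(x_i^T W^T) v)_{i=1}^n with data matrix X ∈ ℝ^{n×d} (rows x_i) and output weights v ∈ ℝ^k. Then the Jacobian of f with respect to W (viewed as a matrix in ℝ^{n × kd}) has operator norm at most √k · B · ‖v‖_∞ · ‖X‖, where ‖X‖ is the operator norm of X. -/
/-!
Split `u ∈ ℝ^{k×d}` into its slices `u_j ∈ ℝ^d`. The Jacobian maps `u` to `∑_j D_j (X u_j)`, where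
`D_j` is diagonal with entries `v_j φ'(⟨w_j, x_i⟩)`, bounded by `B ‖v‖_∞`. The triangle inequality
gives `‖J u‖ ≤ B ‖v‖_∞ ‖X‖ ∑_j ‖u_j‖`, and Cauchy–Schwarz gives `∑_j ‖u_j‖ ≤ √k ‖u‖`.
-/

noncomputable def opNorm {α β : Type*} [Fintype α] [Fintype β] [DecidableEq β]
    (M : Matrix α β ℝ) : ℝ :=
  ‖LinearMap.toContinuousLinearMap (Matrix.toEuclideanLin M)‖

open Matrix WithLp Finset

/-- Row `i` is the Kronecker product of the `i`-th rows of `A` and `X`. With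
`A i = v ⊙ φ'(W xᵢ)` this is the Jacobian of `W ↦ (vᵀ φ(W xᵢ))ᵢ`. -/
def Matrix.faceSplitProduct {α κ β : Type*} (A : Matrix α κ ℝ) (X : Matrix α β ℝ) :
    Matrix α (κ × β) ℝ :=
  of fun i p ↦ A i p.1 * X i p.2

namespace EuclideanSpace

section Slices

variable {κ β : Type*} [Fintype κ] [Fintype β]

def slice (u : EuclideanSpace ℝ (κ × β)) (j : κ) : EuclideanSpace ℝ β :=
  toLp 2 fun l ↦ u (j, l)

theorem sum_norm_slice_sq (u : EuclideanSpace ℝ (κ × β)) :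
    ∑ j, ‖u.slice j‖ ^ 2 = ‖u‖ ^ 2 := by
  simp only [real_norm_sq_eq, Fintype.sum_prod_type]
  rfl

theorem sum_norm_slice_le (u : EuclideanSpace ℝ (κ × β)) :
    ∑ j, ‖u.slice j‖ ≤ √(Fintype.card κ) * ‖u‖ := by
  simpa [sum_norm_slice_sq, Real.sqrt_sq (norm_nonneg u)] using
    Real.sum_mul_le_sqrt_mul_sqrt univ (fun _ ↦ 1) fun j ↦ ‖u.slice j‖

end Slices

theorem norm_toLp_mul_le {α : Type*} [Fintype α] (a : α → ℝ) (y : EuclideanSpace ℝ α)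
    {c : ℝ} (hc : 0 ≤ c) (ha : ∀ i, |a i| ≤ c) :
    ‖(toLp 2 fun i ↦ a i * y i : EuclideanSpace ℝ α)‖ ≤ c * ‖y‖ := by
  rw [norm_eq, norm_eq, ← Real.sqrt_sq hc, ← Real.sqrt_mul (sq_nonneg c), mul_sum]
  gcongr with i
  simp only [Real.norm_eq_abs, abs_mul, mul_pow]
  gcongr
  exact ha i

end EuclideanSpace

theorem opNorm_nonneg {α β : Type*} [Fintype α] [Fintype β] [DecidableEq β]
    (M : Matrix α β ℝ) : 0 ≤ opNorm M :=
  norm_nonneg _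

section FaceSplitProduct

variable {α κ β : Type*} [Fintype κ] [Fintype β] [DecidableEq κ] [DecidableEq β]

theorem toEuclideanLin_faceSplitProduct (A : Matrix α κ ℝ) (X : Matrix α β ℝ)
    (u : EuclideanSpace ℝ (κ × β)) :
    toEuclideanLin (faceSplitProduct A X) u =
      ∑ j, toLp 2 fun i ↦ A i j * toEuclideanLin X (u.slice j) i := by
  ext i
  simp [faceSplitProduct, EuclideanSpace.slice, mulVec, dotProduct, Fintype.sum_prod_type,
    mul_sum, mul_assoc]

theorem opNorm_faceSplitProduct_le [Fintype α] (A : Matrix α κ ℝ) (X : Matrix α β ℝ) {c : ℝ}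
    (hc : 0 ≤ c) (hA : ∀ i j, |A i j| ≤ c) :
    opNorm (faceSplitProduct A X) ≤ √(Fintype.card κ) * c * opNorm X := by
  have hX₀ := opNorm_nonneg X
  refine ContinuousLinearMap.opNorm_le_bound _ (by positivity) fun u ↦ ?_
  have hX : ∀ w, ‖toEuclideanLin X w‖ ≤ opNorm X * ‖w‖ :=
    (LinearMap.toContinuousLinearMap (toEuclideanLin X)).le_opNorm
  calc ‖toEuclideanLin (faceSplitProduct A X) u‖
      = ‖∑ j, (toLp 2 fun i ↦ A i j * toEuclideanLin X (u.slice j) i : EuclideanSpace ℝ α)‖ := by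
        rw [toEuclideanLin_faceSplitProduct]
    _ ≤ ∑ j, c * (opNorm X * ‖u.slice j‖) := by
        refine (norm_sum_le _ _).trans (sum_le_sum fun j _ ↦ ?_)
        exact (EuclideanSpace.norm_toLp_mul_le _ _ hc (hA · j)).trans
          (mul_le_mul_of_nonneg_left (hX _) hc)
    _ = c * opNorm X * ∑ j, ‖u.slice j‖ := by simp only [mul_sum, mul_assoc]
    _ ≤ c * opNorm X * (√(Fintype.card κ) * ‖u‖) := by
        gcongr
        exact u.sum_norm_slice_le
    _ = √(Fintype.card κ) * c * opNorm X * ‖u‖ := by ring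

end FaceSplitProduct

theorem stmt_10_general {n d k : ℕ} (φ' : ℝ → ℝ) (B : ℝ)
    (hB : ∀ z, |φ' z| ≤ B)
    (X : Matrix (Fin n) (Fin d) ℝ) (v : Fin k → ℝ) (W : Matrix (Fin k) (Fin d) ℝ) :
    opNorm (Matrix.of fun (i : Fin n) (p : Fin k × Fin d) =>
        v p.1 * φ' ((W.mulVec (X i)) p.1) * X i p.2) ≤
      Real.sqrt k * B * ‖v‖ * opNorm X := by
  have hB₀ : 0 ≤ B := (abs_nonneg _).trans (hB 0)
  have hA : ∀ i j, |v j * φ' ((W *ᵥ X i) j)| ≤ B * ‖v‖ := fun i j ↦ by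
    rw [abs_mul, mul_comm B]
    exact mul_le_mul (norm_le_pi_norm v j) (hB _) (abs_nonneg _) (norm_nonneg _)
  refine (opNorm_faceSplitProduct_le (of fun i j ↦ v j * φ' ((W *ᵥ X i) j)) X
    (by positivity) hA).trans_eq ?_
  rw [Fintype.card_fin]
  ring

theorem stmt_10 {n d k : ℕ} (φ φ' : ℝ → ℝ) (B : ℝ)
    (hd : ∀ z, HasDerivAt φ (φ' z) z)
    (hB : ∀ z, |φ' z| ≤ B)
    (X : Matrix (Fin n) (Fin d) ℝ) (v : Fin k → ℝ) (W : Matrix (Fin k) (Fin d) ℝ) :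
    opNorm (Matrix.of fun (i : Fin n) (p : Fin k × Fin d) =>
        v p.1 * φ' ((W.mulVec (X i)) p.1) * X i p.2) ≤
      Real.sqrt k * B * ‖v‖ * opNorm X :=
  stmt_10_general φ' B hB X v W
end

section
/- Let φ : ℝ → ℝ satisfy |φ''(z)| ≤ M, let v ∈ ℝ^k, and let x₁,…,x_n ∈ ℝ^d have unit norm, forming rows of X ∈ ℝ^{n×d}. For the one-hidden-layer network f(W)_i = v^T φ(W x_i), the Jacobian map W ↦ 𝒥(W) ∈ ℝ^{n×kd} is Lipschitz in Frobenius norm: ‖𝒥(W̃) − 𝒥(W)‖ ≤ M · ‖v‖_∞ · ‖X‖ · ‖W̃ − W‖_F for all W̃, W ∈ ℝ^{k×d}. -/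
noncomputable def frobNorm {α β : Type*} [Fintype α] [Fintype β]
    (M : Matrix α β ℝ) : ℝ :=
  Real.sqrt (∑ i, ∑ j, (M i j) ^ 2)

/-- The `n × kd` Jacobian of the one-hidden-layer network `W ↦ (vᵀ φ(W xᵢ))ᵢ`. -/
noncomputable def jac {n d k : ℕ} (φ' : ℝ → ℝ) (X : Matrix (Fin n) (Fin d) ℝ)
    (v : Fin k → ℝ) (W : Matrix (Fin k) (Fin d) ℝ) :
    Matrix (Fin n) (Fin k × Fin d) ℝ :=
  Matrix.of fun i p => v p.1 * φ' ((W.mulVec (X i)) p.1) * X i p.2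

/-!
Row `i` of `𝒥(W̃) - 𝒥(W)` is `cᵢ ⊗ xᵢ` with `cᵢ = v ⊙ (φ'(W̃xᵢ) - φ'(Wxᵢ))`, so, the `xᵢ` being
unit vectors, its Frobenius norm is that of the `n × k` matrix `C` with rows `cᵢ`. Since `φ'` is
`M`-Lipschitz, `|C i a| ≤ M ‖v‖_∞ |(X (W̃ - W)ᵀ) i a|`. The result follows from
`‖·‖ ≤ ‖·‖_F` and `‖A B‖_F ≤ ‖A‖ ‖B‖_F`.
-/

open Matrix

section Norms

variable {l m n : Type*} [Fintype l] [Fintype m] [Fintype n]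

lemma frobNorm_nonneg (A : Matrix m n ℝ) : 0 ≤ frobNorm A :=
  Real.sqrt_nonneg _

lemma sq_frobNorm (A : Matrix m n ℝ) : frobNorm A ^ 2 = ∑ i, ∑ j, A i j ^ 2 :=
  Real.sq_sqrt (by positivity)

lemma frobNorm_le_iff {A : Matrix m n ℝ} {c : ℝ} (hc : 0 ≤ c) :
    frobNorm A ≤ c ↔ ∑ i, ∑ j, A i j ^ 2 ≤ c ^ 2 := by
  rw [← sq_le_sq₀ (frobNorm_nonneg A) hc, sq_frobNorm]

lemma frobNorm_transpose (A : Matrix m n ℝ) : frobNorm Aᵀ = frobNorm A := by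
  rw [frobNorm, frobNorm, Finset.sum_comm]
  rfl

lemma frobNorm_le_mul_of_abs_le {A B : Matrix m n ℝ} {c : ℝ} (hc : 0 ≤ c)
    (h : ∀ i j, |A i j| ≤ c * |B i j|) : frobNorm A ≤ c * frobNorm B := by
  rw [frobNorm_le_iff (mul_nonneg hc (frobNorm_nonneg B)), mul_pow, sq_frobNorm,
    Finset.mul_sum]
  gcongr with i _ j _
  rw [Finset.mul_sum]
  gcongr with j _
  rw [← sq_abs, ← sq_abs (B i j), ← mul_pow]
  exact pow_le_pow_left₀ (abs_nonneg _) (h i j) 2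

variable [DecidableEq n]

lemma opNorm_nonneg_s11 (A : Matrix m n ℝ) : 0 ≤ opNorm A :=
  norm_nonneg _

lemma sum_sq_mulVec_le (A : Matrix m n ℝ) (x : n → ℝ) :
    ∑ i, (A *ᵥ x) i ^ 2 ≤ opNorm A ^ 2 * ∑ j, x j ^ 2 := by
  have h : ‖WithLp.toLp 2 (A *ᵥ x)‖ ≤ opNorm A * ‖WithLp.toLp 2 x‖ :=
    (LinearMap.toContinuousLinearMap (toEuclideanLin A)).le_opNorm (WithLp.toLp 2 x)
  have h2 := pow_le_pow_left₀ (norm_nonneg _) h 2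
  rwa [mul_pow, EuclideanSpace.real_norm_sq_eq, EuclideanSpace.real_norm_sq_eq] at h2

lemma opNorm_le_frobNorm (A : Matrix m n ℝ) : opNorm A ≤ frobNorm A := by
  refine ContinuousLinearMap.opNorm_le_bound _ (frobNorm_nonneg A) fun x => ?_
  rw [← sq_le_sq₀ (norm_nonneg _) (mul_nonneg (frobNorm_nonneg A) (norm_nonneg x)), mul_pow,
    sq_frobNorm, EuclideanSpace.real_norm_sq_eq, EuclideanSpace.real_norm_sq_eq,
    Finset.sum_mul]
  gcongr with i _
  exact Finset.sum_mul_sq_le_sq_mul_sq _ _ _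

lemma frobNorm_mul_le (A : Matrix l n ℝ) (B : Matrix n m ℝ) :
    frobNorm (A * B) ≤ opNorm A * frobNorm B := by
  have hcol : ∀ j, ∑ i, (A * B) i j ^ 2 ≤ opNorm A ^ 2 * ∑ q, B q j ^ 2 :=
    fun j => sum_sq_mulVec_le A (fun q => B q j)
  rw [frobNorm_le_iff (mul_nonneg (opNorm_nonneg_s11 A) (frobNorm_nonneg B)), mul_pow, sq_frobNorm,
    Finset.sum_comm, Finset.sum_comm (f := fun i j => B i j ^ 2), Finset.mul_sum]
  exact Finset.sum_le_sum fun j _ => hcol j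

end Norms

/-- The face-splitting product: row `i` of `faceSplit C X` is the Kronecker product of the rows
`C i` and `X i`. -/
def faceSplit {α n k d : Type*} [Mul α] (C : Matrix n k α) (X : Matrix n d α) :
    Matrix n (k × d) α :=
  of fun i p => C i p.1 * X i p.2

lemma frobNorm_faceSplit_of_unit_rows {n k d : Type*} [Fintype n] [Fintype k] [Fintype d]
    (C : Matrix n k ℝ) {X : Matrix n d ℝ} (hX : ∀ i, ∑ b, X i b ^ 2 = 1) :
    frobNorm (faceSplit C X) = frobNorm C := by
  unfold frobNorm
  congr 1
  refine Finset.sum_congr rfl fun i _ => ?_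
  simp only [faceSplit, of_apply, Fintype.sum_prod_type, mul_pow, ← Finset.mul_sum, hX i,
    mul_one]

lemma abs_sub_le_of_abs_deriv_le {f f' : ℝ → ℝ} {M : ℝ} (hf : ∀ z, HasDerivAt f (f' z) z)
    (hM : ∀ z, |f' z| ≤ M) (a b : ℝ) : |f b - f a| ≤ M * |b - a| :=
  Convex.norm_image_sub_le_of_norm_hasDerivWithin_le (fun z _ => (hf z).hasDerivWithinAt)
    (fun z _ => hM z) convex_univ (Set.mem_univ a) (Set.mem_univ b)

lemma jac_sub_jac_eq_faceSplit {n d k : ℕ} (φ' : ℝ → ℝ) (X : Matrix (Fin n) (Fin d) ℝ)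
    (v : Fin k → ℝ) (Wt W : Matrix (Fin k) (Fin d) ℝ) :
    jac φ' X v Wt - jac φ' X v W =
      faceSplit (of fun i a => v a * (φ' ((Wt *ᵥ X i) a) - φ' ((W *ᵥ X i) a))) X := by
  ext i p
  simp only [jac, faceSplit, Matrix.sub_apply, of_apply]
  ring

theorem stmt_11_general {n d k : ℕ} (φ' φ'' : ℝ → ℝ) (M : ℝ)
    (hd2 : ∀ z, HasDerivAt φ' (φ'' z) z)
    (hM : ∀ z, |φ'' z| ≤ M)
    (X : Matrix (Fin n) (Fin d) ℝ)
    (hX : ∀ i, ‖((WithLp.equiv 2 (Fin d → ℝ)).symm (X i))‖ = 1)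
    (v : Fin k → ℝ) (Wt W : Matrix (Fin k) (Fin d) ℝ) :
    opNorm (jac φ' X v Wt - jac φ' X v W) ≤
      M * ‖v‖ * opNorm X * frobNorm (Wt - W) := by
  have hM0 : 0 ≤ M := (abs_nonneg _).trans (hM 0)
  have hrows : ∀ i, ∑ b, X i b ^ 2 = 1 := fun i => by
    have h := EuclideanSpace.real_norm_sq_eq ((WithLp.equiv 2 (Fin d → ℝ)).symm (X i))
    rw [hX i, one_pow] at h
    exact h.symm
  have hentry : ∀ i a, |v a * (φ' ((Wt *ᵥ X i) a) - φ' ((W *ᵥ X i) a))|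
      ≤ M * ‖v‖ * |(X * (Wt - W)ᵀ) i a| := fun i a => by
    have hdiff : (X * (Wt - W)ᵀ) i a = (Wt *ᵥ X i) a - (W *ᵥ X i) a := by
      change (X i ᵥ* (Wt - W)ᵀ) a = _
      rw [vecMul_transpose, sub_mulVec]
      rfl
    rw [abs_mul, hdiff, mul_comm M, mul_assoc]
    exact mul_le_mul (norm_le_pi_norm v a) (abs_sub_le_of_abs_deriv_le hd2 hM _ _)
      (abs_nonneg _) (norm_nonneg v)
  calc opNorm (jac φ' X v Wt - jac φ' X v W)
      ≤ frobNorm (jac φ' X v Wt - jac φ' X v W) := opNorm_le_frobNorm _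
    _ ≤ M * ‖v‖ * frobNorm (X * (Wt - W)ᵀ) := by
        rw [jac_sub_jac_eq_faceSplit, frobNorm_faceSplit_of_unit_rows _ hrows]
        exact frobNorm_le_mul_of_abs_le (by positivity) hentry
    _ ≤ M * ‖v‖ * (opNorm X * frobNorm (Wt - W)ᵀ) := by
        gcongr
        exact frobNorm_mul_le X _
    _ = M * ‖v‖ * opNorm X * frobNorm (Wt - W) := by rw [frobNorm_transpose]; ring

theorem stmt_11 {n d k : ℕ} (φ φ' φ'' : ℝ → ℝ) (M : ℝ)
    (hd1 : ∀ z, HasDerivAt φ (φ' z) z)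
    (hd2 : ∀ z, HasDerivAt φ' (φ'' z) z)
    (hM : ∀ z, |φ'' z| ≤ M)
    (X : Matrix (Fin n) (Fin d) ℝ)
    (hX : ∀ i, ‖((WithLp.equiv 2 (Fin d → ℝ)).symm (X i))‖ = 1)
    (v : Fin k → ℝ) (Wt W : Matrix (Fin k) (Fin d) ℝ) :
    opNorm (jac φ' X v Wt - jac φ' X v W) ≤
      M * ‖v‖ * opNorm X * frobNorm (Wt - W) :=
  stmt_11_general φ' φ'' M hd2 hM X hX v Wt W
end
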